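/- arXiv:2106.01242 — 3 statements merged into one kernel-verified Lean document; each statement's English description precedes it below -/
import Mathlib

section
/- Let m ≥ 1, 0 < β < 1/2, and let A be a multiset of m real numbers partitioned into a 'benign' set A⁺ of size > (1-β)m whose elements are i.i.d. samples from N(μ, 1), and an adversarial set A⁻ of size < βm with arbitrary values. Let Φ be the standard normal CDF and let t satisfy Φ(t) ≥ 1/2 + β. Then the probability that the median of A exceeds μ + t is at most exp(-2m(Φ(t) - 1/2 - β)²). -/
/-!
If the median exceeds `μ + t`, more than half of the `m` points do; since fewer than `βm` of them
are adversarial, at least `(1/2 - β)m` benign samples exceed `μ + t`. Each benign sample does so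
independently with probability `1 - Φ(t) ≤ 1/2 - β`, so Hoeffding's inequality for the number of
successes bounds the probability of this by `exp(-2m(Φ(t) - 1/2 - β)²)`.
-/

open MeasureTheory ProbabilityTheory Real

/-- Median of a multiset of reals: its `⌈card/2⌉`-th smallest element. -/
noncomputable def multisetMedian (s : Multiset ℝ) : ℝ :=
  (s.sort (· ≤ ·)).getD ((s.card + 1) / 2 - 1) 0

/-- Standard normal CDF. -/
noncomputable def stdGaussCDF (t : ℝ) : ℝ :=
  ((gaussianReal 0 1) (Set.Iic t)).toReal

open Set Finset

lemma card_lt_two_mul_countP_of_lt_multisetMedian {s : Multiset ℝ} {c : ℝ} (hs : s ≠ 0)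
    (h : c < multisetMedian s) : s.card < 2 * s.countP (c < ·) := by
  set l := s.sort (· ≤ ·)
  have hlen : l.length = s.card := Multiset.length_sort _
  have hpos : 0 < s.card := Multiset.card_pos.mpr hs
  set k := (s.card + 1) / 2 - 1
  have hk : k < l.length := by omega
  have hmed : multisetMedian s = l[k] := List.getD_eq_getElem l 0 hk
  have hdrop : ∀ a ∈ l.drop k, c < a := by
    intro a ha
    obtain ⟨j, hj, rfl⟩ := List.mem_iff_getElem.1 ha
    rw [List.getElem_drop]
    exact h.trans_le (hmed ▸ (s.pairwise_sort _).rel_get_of_le (by simp [Fin.le_def]))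
  have hcount : l.length - k ≤ s.countP (c < ·) := by
    rw [← List.length_drop,
      ← (List.countP_eq_length (p := fun x ↦ decide (c < x))).2 (by simpa using hdrop),
      ← Multiset.sort_eq s (· ≤ ·), Multiset.coe_countP]
    exact (List.drop_sublist _ _).countP_le
  omega

lemma lt_sum_indicator_of_lt_multisetMedian {ι : Type*} [Fintype ι] [Nonempty ι] {x : ι → ℝ}
    {a : Multiset ℝ} {c : ℝ} (h : c < multisetMedian (univ.val.map x + a)) :
    (Fintype.card ι + a.card : ℝ) / 2 - a.card < ∑ i, (Ioi c).indicator 1 (x i) := by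
  classical
  have hne : univ.val.map x + a ≠ 0 := by simp [Finset.univ_nonempty.ne_empty]
  have hhalf := card_lt_two_mul_countP_of_lt_multisetMedian hne h
  rw [Multiset.card_add, Multiset.countP_add, Multiset.countP_map, Multiset.card_map,
    ← filter_val, card_val, card_val, card_univ] at hhalf
  have hsum : ∑ i, (Ioi c).indicator (1 : ℝ → ℝ) (x i) = #{i | c < x i} := by
    simp [indicator_apply, sum_boole]
  have hadv := Multiset.countP_le_card (c < ·) a
  have : (Fintype.card ι + a.card : ℝ) < 2 * (#{i | c < x i} + a.card) := by
    exact_mod_cast hhalf.trans_le (by omega)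
  linarith

section Hoeffding

variable {Ω ι : Type*} {mΩ : MeasurableSpace Ω} {μ : Measure Ω} [IsProbabilityMeasure μ]

lemma measureReal_sum_sub_integral_ge_le_of_mem_Icc_zero_one {Y : ι → Ω → ℝ}
    (hind : iIndepFun Y μ) (hmeas : ∀ i, AEMeasurable (Y i) μ)
    (hY : ∀ i, ∀ᵐ ω ∂μ, Y i ω ∈ Set.Icc 0 1) (s : Finset ι) {ε : ℝ} (hε : 0 ≤ ε) :
    μ.real {ω | ε ≤ ∑ i ∈ s, (Y i ω - μ[Y i])} ≤ exp (-2 * ε ^ 2 / #s) := by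
  have hsub : ∀ i ∈ s, HasSubgaussianMGF (fun ω ↦ Y i ω - μ[Y i]) (1 / 4) μ := fun i _ ↦ by
    convert hasSubgaussianMGF_of_mem_Icc (hmeas i) (hY i)
    norm_num
  have hind' := hind.comp (fun i (x : ℝ) ↦ x - μ[Y i]) (fun i ↦ measurable_sub_const _)
  refine (HasSubgaussianMGF.measure_sum_ge_le_of_iIndepFun hind' hsub hε).trans_eq ?_
  rw [sum_const, nsmul_eq_mul]
  congr 1
  push_cast
  ring

lemma measureReal_sum_indicator_ge_le_of_iIndepFun [Fintype ι] {E : Type*} [MeasurableSpace E]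
    {X : ι → Ω → E} (hind : iIndepFun X μ) (hmeas : ∀ i, Measurable (X i)) {S : Set E}
    (hS : MeasurableSet S) {p : ℝ} (hp : ∀ i, μ.real (X i ⁻¹' S) = p) {a : ℝ}
    (ha : Fintype.card ι * p ≤ a) :
    μ.real {ω | a ≤ ∑ i, S.indicator 1 (X i ω)} ≤
      exp (-2 * (a - Fintype.card ι * p) ^ 2 / Fintype.card ι) := by
  set Y : ι → Ω → ℝ := fun i ω ↦ S.indicator 1 (X i ω)
  have hYmeas : ∀ i, Measurable (Y i) := fun i ↦ (measurable_const.indicator hS).comp (hmeas i)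
  have hY : ∀ i, ∀ᵐ ω ∂μ, Y i ω ∈ Set.Icc 0 1 := fun i ↦ ae_of_all _ fun ω ↦
    ⟨indicator_nonneg (fun _ _ ↦ zero_le_one) _, indicator_le_self' (fun _ _ ↦ zero_le_one) _⟩
  have hmean : ∀ i, μ[Y i] = p := fun i ↦ by
    rw [← hp i, ← integral_indicator_one (hmeas i hS)]
    rfl
  have hset : {ω | a ≤ ∑ i, Y i ω} = {ω | a - Fintype.card ι * p ≤ ∑ i, (Y i ω - μ[Y i])} := by
    simp [sum_sub_distrib, hmean]
  rw [hset]
  exact measureReal_sum_sub_integral_ge_le_of_mem_Icc_zero_one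
    (hind.comp _ fun _ ↦ measurable_const.indicator hS) (fun i ↦ (hYmeas i).aemeasurable) hY
    univ (sub_nonneg.2 ha)

end Hoeffding

lemma gaussianReal_real_Ioi_add (μ t : ℝ) :
    (gaussianReal μ 1).real (Ioi (μ + t)) = 1 - stdGaussCDF t := by
  have hshift : gaussianReal μ 1 = (gaussianReal 0 1).map (· + μ) := by
    rw [gaussianReal_map_add_const, zero_add]
  have hpre : (· + μ) ⁻¹' Ioi (μ + t) = (Iic t)ᶜ := by
    ext x; simp [add_comm μ]
  rw [hshift, map_measureReal_apply (measurable_add_const μ) measurableSet_Ioi, hpre,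
    probReal_compl_eq_one_sub measurableSet_Iic, stdGaussCDF, measureReal_def]

lemma neg_two_mul_sq_div_le {b m δ ε : ℝ} (hb : 0 < b) (hbm : b ≤ m) (hδ : 0 ≤ δ)
    (hε : δ * m ≤ ε) : -2 * ε ^ 2 / b ≤ -2 * m * δ ^ 2 := by
  rw [div_le_iff₀ hb]
  have hδm : 0 ≤ δ * m := mul_nonneg hδ (hb.le.trans hbm)
  nlinarith [mul_le_mul_of_nonneg_left hbm (mul_nonneg hδm hδ), pow_le_pow_left₀ hδm hε 2]

theorem stmt0_general {Ω : Type*} [MeasureSpace Ω] [IsProbabilityMeasure (ℙ : Measure Ω)]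
    (m b : ℕ) (β μ t : ℝ) (hβ : β < 1/2)
    (X : Fin b → Ω → ℝ) (hXmeas : ∀ i, Measurable (X i))
    (hXindep : iIndepFun X ℙ)
    (hXlaw : ∀ i, Measure.map (X i) ℙ = gaussianReal μ 1)
    (adv : Multiset ℝ)
    (hcard : b + adv.card = m)
    (hbenign : (1 - β) * m < (b : ℝ))
    (hadv : (adv.card : ℝ) < β * m)
    (ht : 1/2 + β ≤ stdGaussCDF t) :
    ℙ {ω | μ + t < multisetMedian ((Finset.univ.val.map fun i => X i ω) + adv)}
      ≤ ENNReal.ofReal (Real.exp (-2 * m * (stdGaussCDF t - 1/2 - β)^2)) := by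
  have hm : (m : ℝ) = b + adv.card := by rw [← hcard]; push_cast; rfl
  have hb : (0 : ℝ) < b := lt_of_le_of_lt (by nlinarith) hbenign
  have : Nonempty (Fin b) := ⟨⟨0, by exact_mod_cast hb⟩⟩
  have htail (i : Fin b) : (ℙ : Measure Ω).real (X i ⁻¹' Ioi (μ + t)) = 1 - stdGaussCDF t := by
    rw [← map_measureReal_apply (hXmeas i) measurableSet_Ioi, hXlaw i, gaussianReal_real_Ioi_add]
  have hp : 0 ≤ 1 - stdGaussCDF t := htail ⟨0, by exact_mod_cast hb⟩ ▸ measureReal_nonneg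
  have hsub : {ω | μ + t < multisetMedian ((univ.val.map fun i => X i ω) + adv)} ⊆
      {ω | (1/2 - β) * m ≤ ∑ i, (Ioi (μ + t)).indicator 1 (X i ω)} := fun ω hω ↦ by
    have := lt_sum_indicator_of_lt_multisetMedian hω
    rw [Fintype.card_fin] at this
    exact (show (1/2 - β) * m ≤ _ by linarith).trans this.le
  have hmargin : b * (1 - stdGaussCDF t) + (stdGaussCDF t - 1/2 - β) * m ≤ (1/2 - β) * m := by
    linarith [mul_le_mul_of_nonneg_right (show (b : ℝ) ≤ m by linarith) hp]
  have hmargin_nonneg : 0 ≤ (stdGaussCDF t - 1/2 - β) * m :=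
    mul_nonneg (by linarith) (by linarith)
  calc ℙ {ω | μ + t < multisetMedian ((univ.val.map fun i => X i ω) + adv)}
      ≤ ℙ {ω | (1/2 - β) * m ≤ ∑ i, (Ioi (μ + t)).indicator 1 (X i ω)} := measure_mono hsub
    _ = ENNReal.ofReal ((ℙ : Measure Ω).real
          {ω | (1/2 - β) * m ≤ ∑ i, (Ioi (μ + t)).indicator 1 (X i ω)}) :=
      (ENNReal.ofReal_toReal (measure_ne_top _ _)).symm
    _ ≤ ENNReal.ofReal (exp (-2 * ((1/2 - β) * m - b * (1 - stdGaussCDF t)) ^ 2 / b)) := by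
      gcongr
      simpa only [Fintype.card_fin] using measureReal_sum_indicator_ge_le_of_iIndepFun hXindep
        hXmeas measurableSet_Ioi htail (by simp only [Fintype.card_fin]; linarith)
    _ ≤ ENNReal.ofReal (exp (-2 * m * (stdGaussCDF t - 1/2 - β) ^ 2)) := by
      gcongr
      exact neg_two_mul_sq_div_le hb (by linarith) (by linarith) (by linarith)

/-- Robust one-sided median concentration: with `m` scores, more than `(1-β)m` of which are
i.i.d. `N(μ,1)` samples and fewer than `βm` adversarial (`β < 1/2`), for `t` with
`Φ(t) ≥ 1/2 + β`, the probability that the median exceeds `μ + t` is at most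
`exp(-2m(Φ(t) - 1/2 - β)²)`. -/
theorem stmt0 {Ω : Type*} [MeasureSpace Ω] [IsProbabilityMeasure (ℙ : Measure Ω)]
    (m b : ℕ) (hm : 1 ≤ m) (β μ t : ℝ) (hβ0 : 0 < β) (hβ : β < 1/2)
    (X : Fin b → Ω → ℝ) (hXmeas : ∀ i, Measurable (X i))
    (hXindep : iIndepFun X ℙ)
    (hXlaw : ∀ i, Measure.map (X i) ℙ = gaussianReal μ 1)
    (adv : Multiset ℝ)
    (hcard : b + adv.card = m)
    (hbenign : (1 - β) * m < (b : ℝ))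
    (hadv : (adv.card : ℝ) < β * m)
    (ht : 1/2 + β ≤ stdGaussCDF t) :
    ℙ {ω | μ + t < multisetMedian ((Finset.univ.val.map fun i => X i ω) + adv)}
      ≤ ENNReal.ofReal (Real.exp (-2 * m * (stdGaussCDF t - 1/2 - β)^2)) :=
  stmt0_general m b β μ t hβ X hXmeas hXindep hXlaw adv hcard hbenign hadv ht
end

section
/- The Gaussian mechanism M(D) = f(D) + N(0, σ²I) on a function f : 𝒳ⁿ → ℝᵈ with L2-sensitivity at most 1 satisfies (α, α/(2σ²))-Rényi differential privacy for every α > 1. -/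
/-!
Up to the isometry `EuclideanSpace ℝ ι ≃ (ι → ℝ)`, which preserves Rényi divergences, the two
outputs of the mechanism are product measures of one-dimensional Gaussians `𝒩(uᵢ, v)` and
`𝒩(wᵢ, v)`. The Radon–Nikodym derivative of a product of measures is the product of the
coordinatewise derivatives, so the Rényi integral factorises over the coordinates. In one
dimension, completing the square gives `(pᵤ / p_w) ^ α * p_w = exp (α (α - 1) (u - w)² / (2 v)) *
p_{α u + (1 - α) w}`, so `D_α = α ‖u - w‖² / (2 v)`, which is at most `α / (2 σ²)` when the
sensitivity is at most `1`.
-/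

open MeasureTheory ProbabilityTheory Real
open scoped ENNReal NNReal

/-- Rényi divergence of order `α`. -/
noncomputable def renyiD {Ω : Type*} [MeasurableSpace Ω] (α : ℝ) (P Q : Measure Ω) : ℝ :=
  (α - 1)⁻¹ * Real.log (∫ x, ((P.rnDeriv Q) x).toReal ^ α ∂Q)

namespace MeasureTheory

variable {ι : Type*} [Fintype ι] {Ω : ι → Type*} [∀ i, MeasurableSpace (Ω i)]

theorem lintegral_pi_prod (μ : ∀ i, Measure (Ω i)) [∀ i, IsProbabilityMeasure (μ i)]
    {f : ∀ i, Ω i → ℝ≥0∞} (hf : ∀ i, Measurable (f i)) :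
    ∫⁻ x, ∏ i, f i (x i) ∂Measure.pi μ = ∏ i, ∫⁻ y, f i y ∂μ i := by
  rw [lintegral_prod_eq_prod_lintegral_of_indepFun _ _
    (iIndepFun_pi fun i => (hf i).aemeasurable) fun i => (hf i).comp (measurable_pi_apply i)]
  exact Finset.prod_congr rfl fun i _ => (measurePreserving_eval μ i).lintegral_comp (hf i)

variable {P Q : ∀ i, Measure (Ω i)} [∀ i, IsProbabilityMeasure (P i)]
  [∀ i, IsProbabilityMeasure (Q i)]

theorem Measure.pi_eq_withDensity_prod_rnDeriv (hPQ : ∀ i, P i ≪ Q i) :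
    Measure.pi P = (Measure.pi Q).withDensity fun x => ∏ i, (P i).rnDeriv (Q i) (x i) := by
  refine Measure.pi_eq fun s hs => ?_
  have hind : (Set.univ.pi s).indicator (fun x => ∏ i, (P i).rnDeriv (Q i) (x i))
      = fun x => ∏ i, (s i).indicator ((P i).rnDeriv (Q i)) (x i) := by
    ext x
    classical
    simp only [Set.indicator_apply, Set.mem_univ_pi, Finset.prod_ite_zero, Finset.mem_univ,
      true_imp_iff]
  rw [withDensity_apply _ (.univ_pi hs), ← lintegral_indicator (.univ_pi hs), hind,
    lintegral_pi_prod Q fun i => (Measure.measurable_rnDeriv _ _).indicator (hs i)]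
  refine Finset.prod_congr rfl fun i _ => ?_
  rw [lintegral_indicator (hs i), Measure.setLIntegral_rnDeriv (hPQ i)]

theorem Measure.rnDeriv_pi (hPQ : ∀ i, P i ≪ Q i) :
    (Measure.pi P).rnDeriv (Measure.pi Q)
      =ᵐ[Measure.pi Q] fun x => ∏ i, (P i).rnDeriv (Q i) (x i) := by
  rw [Measure.pi_eq_withDensity_prod_rnDeriv hPQ]
  exact Measure.rnDeriv_withDensity _ <| Finset.measurable_prod _ fun i _ =>
    (Measure.measurable_rnDeriv _ _).comp (measurable_pi_apply i)

theorem integral_rnDeriv_pi_rpow (hPQ : ∀ i, P i ≪ Q i) (α : ℝ) :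
    ∫ x, ((Measure.pi P).rnDeriv (Measure.pi Q) x).toReal ^ α ∂Measure.pi Q
      = ∏ i, ∫ y, ((P i).rnDeriv (Q i) y).toReal ^ α ∂Q i := by
  rw [← integral_fintype_prod_eq_prod]
  refine integral_congr_ae ?_
  filter_upwards [Measure.rnDeriv_pi hPQ] with x hx
  rw [hx, ENNReal.toReal_prod, Real.finsetProd_rpow _ _ fun i _ => ENNReal.toReal_nonneg]

end MeasureTheory

theorem renyiD_map {Ω Ω' : Type*} [MeasurableSpace Ω] [MeasurableSpace Ω'] {f : Ω → Ω'}
    (hf : MeasurableEmbedding f) (α : ℝ) (P Q : Measure Ω) [SigmaFinite P] [SigmaFinite Q] :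
    renyiD α (P.map f) (Q.map f) = renyiD α P Q := by
  rw [renyiD, renyiD, hf.integral_map]
  congr 2
  refine integral_congr_ae ?_
  filter_upwards [hf.rnDeriv_map P Q] with x hx
  rw [hx]

namespace ProbabilityTheory

variable {ι : Type*} [Fintype ι] {v : ℝ≥0}

theorem gaussianPDFReal_div_rpow_mul (hv : v ≠ 0) (u w α y : ℝ) :
    (gaussianPDFReal u v y / gaussianPDFReal w v y) ^ α * gaussianPDFReal w v y
      = exp (α * (α - 1) * (u - w) ^ 2 / (2 * v)) * gaussianPDFReal (α * u + (1 - α) * w) v y := by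
  have hv' : (0 : ℝ) < v := NNReal.coe_pos.mpr (pos_iff_ne_zero.mpr hv)
  have hc : (√(2 * π * v))⁻¹ ≠ 0 := by positivity
  simp only [gaussianPDFReal, mul_div_mul_left _ _ hc, ← Real.exp_sub, ← Real.exp_mul]
  rw [mul_left_comm, ← Real.exp_add, mul_left_comm, ← Real.exp_add]
  congr 2
  field_simp
  ring

theorem rnDeriv_gaussianReal_gaussianReal (hv : v ≠ 0) (u w : ℝ) :
    (gaussianReal u v).rnDeriv (gaussianReal w v)
      =ᵐ[gaussianReal w v]
        fun x => ENNReal.ofReal (gaussianPDFReal u v x / gaussianPDFReal w v x) := by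
  filter_upwards [Measure.rnDeriv_eq_div (gaussianReal_absolutelyContinuous u hv)
      (gaussianReal_absolutelyContinuous w hv),
    (gaussianReal_absolutelyContinuous w hv).ae_eq (rnDeriv_gaussianReal u v),
    (gaussianReal_absolutelyContinuous w hv).ae_eq (rnDeriv_gaussianReal w v)] with x hx hu hw
  rw [hx, hu, hw, gaussianPDF, gaussianPDF,
    ENNReal.ofReal_div_of_pos (gaussianPDFReal_pos _ _ _ hv)]

theorem integral_rnDeriv_gaussianReal_rpow (hv : v ≠ 0) (u w α : ℝ) :
    ∫ x, ((gaussianReal u v).rnDeriv (gaussianReal w v) x).toReal ^ α ∂gaussianReal w v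
      = exp (α * (α - 1) * (u - w) ^ 2 / (2 * v)) := by
  have hratio : ∀ x, 0 ≤ gaussianPDFReal u v x / gaussianPDFReal w v x := fun x =>
    div_nonneg (gaussianPDFReal_nonneg _ _ _) (gaussianPDFReal_nonneg _ _ _)
  rw [integral_congr_ae (by
      filter_upwards [rnDeriv_gaussianReal_gaussianReal hv u w] with x hx
      rw [hx, ENNReal.toReal_ofReal (hratio x)]),
    integral_gaussianReal_eq_integral_smul hv]
  simp_rw [smul_eq_mul, mul_comm (gaussianPDFReal w v _), gaussianPDFReal_div_rpow_mul hv]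
  rw [integral_const_mul, integral_gaussianPDFReal_eq_one _ hv, mul_one]

theorem map_const_add_pi_gaussianReal (u : ι → ℝ) :
    (Measure.pi fun _ : ι => gaussianReal 0 v).map (u + ·)
      = Measure.pi fun i => gaussianReal (u i) v := by
  rw [show (u + ·) = fun (x : ι → ℝ) i => u i + x i from rfl,
    Measure.pi_map_pi fun i => (measurable_const_add (u i)).aemeasurable]
  simp_rw [gaussianReal_map_const_add, zero_add]

end ProbabilityTheory

theorem renyiD_pi_gaussianReal {ι : Type*} [Fintype ι] {v : ℝ≥0} (hv : v ≠ 0) {α : ℝ}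
    (hα : α ≠ 1) (u w : ι → ℝ) :
    renyiD α (Measure.pi fun i => gaussianReal (u i) v) (Measure.pi fun i => gaussianReal (w i) v)
      = α * (∑ i, (u i - w i) ^ 2) / (2 * v) := by
  have hα' : α - 1 ≠ 0 := sub_ne_zero.mpr hα
  rw [renyiD, integral_rnDeriv_pi_rpow fun i => (gaussianReal_absolutelyContinuous (u i) hv).trans
    (gaussianReal_absolutelyContinuous' (w i) hv)]
  simp_rw [integral_rnDeriv_gaussianReal_rpow hv, ← Real.exp_sum, Real.log_exp, ← Finset.sum_div,
    ← Finset.mul_sum]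
  field_simp

theorem renyiD_map_add_pi_gaussianReal {ι : Type*} [Fintype ι] {v : ℝ≥0} (hv : v ≠ 0) {α : ℝ}
    (hα : α ≠ 1) (x y : EuclideanSpace ℝ ι) :
    renyiD α ((Measure.pi fun _ : ι => gaussianReal 0 v).map
        fun ξ => x + (EuclideanSpace.equiv ι ℝ).symm ξ)
      ((Measure.pi fun _ : ι => gaussianReal 0 v).map
        fun ξ => y + (EuclideanSpace.equiv ι ℝ).symm ξ)
      = α * ‖x - y‖ ^ 2 / (2 * v) := by
  have hshift : ∀ z : EuclideanSpace ℝ ι,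
      (Measure.pi fun _ : ι => gaussianReal 0 v).map
          (fun ξ => z + (EuclideanSpace.equiv ι ℝ).symm ξ)
        = (Measure.pi fun i => gaussianReal (z i) v).map (MeasurableEquiv.toLp 2 (ι → ℝ)) := by
    intro z
    rw [← map_const_add_pi_gaussianReal (WithLp.ofLp z),
      Measure.map_map (MeasurableEquiv.toLp 2 (ι → ℝ)).measurable (measurable_const_add _)]
    rfl
  rw [hshift, hshift, renyiD_map (MeasurableEquiv.toLp 2 (ι → ℝ)).measurableEmbedding,
    renyiD_pi_gaussianReal hv hα, EuclideanSpace.norm_sq_eq]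
  simp [Real.norm_eq_abs, sq_abs]

/-- The Gaussian mechanism `M(D) = f(D) + N(0, σ²I)` on a function `f : 𝒳ⁿ → ℝᵈ` with
L2-sensitivity at most `1` satisfies `(α, α/(2σ²))`-RDP for every `α > 1`. -/
theorem stmt13 {X : Type*} (d : ℕ) (adj : X → X → Prop)
    (f : X → EuclideanSpace ℝ (Fin d)) (σ α : ℝ) (hσ : 0 < σ) (hα : 1 < α)
    (hsens : ∀ D D', adj D D' → ‖f D - f D'‖ ≤ 1) :
    ∀ D D', adj D D' →
      renyiD α
        (Measure.map (fun ξ => f D + (EuclideanSpace.equiv (Fin d) ℝ).symm ξ)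
          (Measure.pi fun _ : Fin d => gaussianReal 0 ⟨σ^2, sq_nonneg σ⟩))
        (Measure.map (fun ξ => f D' + (EuclideanSpace.equiv (Fin d) ℝ).symm ξ)
          (Measure.pi fun _ : Fin d => gaussianReal 0 ⟨σ^2, sq_nonneg σ⟩))
      ≤ α / (2 * σ^2) := by
  intro D D' hadj
  have hv : (⟨σ^2, sq_nonneg σ⟩ : ℝ≥0) ≠ 0 := ne_of_gt (NNReal.coe_pos.mp (pow_pos hσ 2))
  rw [renyiD_map_add_pi_gaussianReal hv hα.ne']
  have hnorm : ‖f D - f D'‖ ^ 2 ≤ 1 := pow_le_one₀ (norm_nonneg _) (hsens D D' hadj)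
  change α * ‖f D - f D'‖ ^ 2 / (2 * σ ^ 2) ≤ α / (2 * σ ^ 2)
  gcongr
  exact mul_le_of_le_one_right (by linarith) hnorm
end

section
/- If more than (1−β)m of m reported scores lie in a set A⁺ and fewer than βm are adversarial, with β < 1/2, then the median of all m scores lies between the (1/2 − β)-quantile and the (1/2 + β)-quantile of A⁺. -/
/-- The `q`-quantile of a finite multiset of reals: its `⌈q·card⌉`-th smallest element. -/
noncomputable def multisetQuantile (q : ℝ) (s : Multiset ℝ) : ℝ :=
  (s.sort (· ≤ ·)).getD (⌈q * s.card⌉.toNat - 1) 0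

/-! The `i`-th smallest element of a multiset is `≤ x` iff more than `i` of its elements are
`≤ x`. Counting with this criterion, adding `a` values to a multiset can only lower its
`i`-th smallest element, and can raise it at most to the `(i + a)`-th smallest element of the sum.
For `n` benign scores, `c = ⌈(1/2 - β) n⌉` and `h = ⌈(1/2 + β) n⌉`, the hypotheses give
`c + a ≤ ⌈m/2⌉ ≤ h`, so the median of all scores lies between the `c`-th and the `h`-th
smallest benign score. -/

theorem List.SortedLE.getElem_le_iff_lt_countP {α : Type*} [LinearOrder α] {l : List α}
    (hl : l.SortedLE) {i : ℕ} (hi : i < l.length) (x : α) :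
    l[i] ≤ x ↔ i < l.countP (· ≤ x) := by
  constructor
  · intro hix
    have htake : ∀ a ∈ l.take (i + 1), a ≤ x := by
      intro a ha
      obtain ⟨j, hj, rfl⟩ := List.mem_iff_getElem.mp ha
      rw [List.getElem_take]
      exact (hl.getElem_le_getElem_of_le (by simp at hj; omega)).trans hix
    calc i < (l.take (i + 1)).length := by simp; omega
      _ = (l.take (i + 1)).countP (· ≤ x) := (List.countP_eq_length.mpr (by simpa using htake)).symm
      _ ≤ l.countP (· ≤ x) := (List.take_sublist _ _).countP_le
  · intro hcount
    by_contra! hxi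
    have hdrop : (l.drop i).countP (· ≤ x) = 0 := by
      refine List.countP_eq_zero.mpr fun a ha => ?_
      obtain ⟨j, hj, rfl⟩ := List.mem_iff_getElem.mp ha
      rw [List.getElem_drop]
      simpa using hxi.trans_le (hl.getElem_le_getElem_of_le (Nat.le_add_right i j))
    have : l.countP (· ≤ x) ≤ i := by
      rw [← List.take_append_drop i l, List.countP_append, hdrop, Nat.add_zero]
      exact List.countP_le_length.trans (List.length_take_le _ _)
    omega

namespace Multiset

variable {α : Type*} [LinearOrder α]

theorem sortedLE_sort (s : Multiset α) : (s.sort (· ≤ ·)).SortedLE :=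
  (s.pairwise_sort _).sortedLE

theorem sort_getD_le_iff_lt_countP (s : Multiset α) {i : ℕ} (hi : i < card s) (d x : α) :
    (s.sort (· ≤ ·)).getD i d ≤ x ↔ i < s.countP (· ≤ x) := by
  have hi' : i < (s.sort (· ≤ ·)).length := by rwa [length_sort]
  rw [List.getD_eq_getElem _ _ hi', (sortedLE_sort s).getElem_le_iff_lt_countP hi',
    ← coe_countP, sort_eq]

theorem sort_getD_mono (s : Multiset α) (d : α) {i j : ℕ} (hij : i ≤ j) (hj : j < card s) :
    (s.sort (· ≤ ·)).getD i d ≤ (s.sort (· ≤ ·)).getD j d := by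
  rw [sort_getD_le_iff_lt_countP s (hij.trans_lt hj)]
  exact hij.trans_lt ((sort_getD_le_iff_lt_countP s hj d _).mp le_rfl)

theorem sort_add_getD_le (s t : Multiset α) (d : α) {i : ℕ} (hi : i < card s) :
    ((s + t).sort (· ≤ ·)).getD i d ≤ (s.sort (· ≤ ·)).getD i d := by
  rw [sort_getD_le_iff_lt_countP _ (by rw [card_add]; omega), countP_add]
  exact ((sort_getD_le_iff_lt_countP s hi d _).mp le_rfl).trans_le (Nat.le_add_right _ _)

theorem sort_getD_le_sort_add_getD (s t : Multiset α) (d : α) {i : ℕ} (hi : i < card s) :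
    (s.sort (· ≤ ·)).getD i d ≤ ((s + t).sort (· ≤ ·)).getD (i + card t) d := by
  set y := ((s + t).sort (· ≤ ·)).getD (i + card t) d
  have hy : i + card t < countP (· ≤ y) s + countP (· ≤ y) t := by
    rw [← countP_add, ← sort_getD_le_iff_lt_countP _ (by rw [card_add]; omega)]
  rw [sort_getD_le_iff_lt_countP s hi]
  have := countP_le_card (· ≤ y) t
  omega

end Multiset

theorem quantile_index_add_card_le_median_index {n a : ℕ} {β : ℝ} (hβ : β < 1/2) (hn : 0 < n)
    (hadv : (a : ℝ) < β * (n + a)) :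
    1 ≤ ⌈(1/2 - β) * n⌉₊ ∧ ⌈(1/2 - β) * n⌉₊ + a ≤ (n + a + 1) / 2 := by
  have hnR : (0 : ℝ) < n := by exact_mod_cast hn
  have hpos : 0 < (1/2 - β) * n := by nlinarith
  refine ⟨Nat.one_le_ceil_iff.mpr hpos, ?_⟩
  have hceil := Nat.ceil_lt_add_one hpos.le
  have : ((2 * (⌈(1/2 - β) * n⌉₊ + a) : ℕ) : ℝ) < n + a + 2 := by push_cast; nlinarith
  have : 2 * (⌈(1/2 - β) * n⌉₊ + a) < n + a + 2 := by exact_mod_cast this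
  omega

theorem median_index_le_quantile_index {n a : ℕ} {β : ℝ} (hβ : β < 1/2)
    (hplus : (1 - β) * (n + a) < n) :
    (n + a + 1) / 2 ≤ ⌈(1/2 + β) * n⌉₊ ∧ ⌈(1/2 + β) * n⌉₊ ≤ n := by
  refine ⟨?_, Nat.ceil_le.mpr (by nlinarith [(n.cast_nonneg : (0 : ℝ) ≤ n)])⟩
  have hceil := Nat.le_ceil ((1/2 + β) * n)
  have : ((n + a : ℕ) : ℝ) < 2 * ⌈(1/2 + β) * n⌉₊ := by
    push_cast; nlinarith [(a.cast_nonneg : (0 : ℝ) ≤ a)]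
  have : n + a < 2 * ⌈(1/2 + β) * n⌉₊ := by exact_mod_cast this
  omega

theorem stmt19_general (m : ℕ) (β : ℝ) (hβ : β < 1/2)
    (Aplus Aadv : Multiset ℝ)
    (hm : (Aplus + Aadv).card = m)
    (hplus : (1 - β) * m < (Aplus.card : ℝ))
    (hadv : (Aadv.card : ℝ) < β * m) :
    multisetQuantile (1/2 - β) Aplus ≤ multisetMedian (Aplus + Aadv) ∧
    multisetMedian (Aplus + Aadv) ≤ multisetQuantile (1/2 + β) Aplus := by
  subst hm
  rw [Multiset.card_add, Nat.cast_add] at hplus hadv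
  have hn : 0 < Aplus.card := by
    by_contra! h
    simp only [Nat.le_zero.mp h, Nat.cast_zero, zero_add] at hplus
    nlinarith [(Aadv.card.cast_nonneg : (0 : ℝ) ≤ _)]
  obtain ⟨hc_pos, hc_add⟩ := quantile_index_add_card_le_median_index hβ hn hadv
  obtain ⟨hk_le, hh_le⟩ := median_index_le_quantile_index hβ hplus
  unfold multisetQuantile multisetMedian
  rw [Int.ceil_toNat, Int.ceil_toNat, Multiset.card_add]
  constructor
  · calc _ ≤ ((Aplus + Aadv).sort (· ≤ ·)).getD (⌈(1/2 - β) * Aplus.card⌉₊ - 1 + Aadv.card) 0 :=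
          Multiset.sort_getD_le_sort_add_getD _ _ _ (by omega)
      _ ≤ _ := Multiset.sort_getD_mono _ _ (by omega) (by rw [Multiset.card_add]; omega)
  · exact (Multiset.sort_getD_mono _ _ (by omega) (by rw [Multiset.card_add]; omega)).trans
      (Multiset.sort_add_getD_le _ _ _ (by omega))

/-- Deterministic sandwiching of the robust median: if more than `(1−β)m` of the `m` scores are
benign (multiset `Aplus`) and fewer than `βm` are adversarial, with `β < 1/2`, then the median
of all `m` scores lies between the `(1/2−β)`- and `(1/2+β)`-quantiles of the benign scores. -/
theorem stmt19 (m : ℕ) (β : ℝ) (hβ0 : 0 < β) (hβ : β < 1/2)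
    (Aplus Aadv : Multiset ℝ)
    (hm : (Aplus + Aadv).card = m)
    (hplus : (1 - β) * m < (Aplus.card : ℝ))
    (hadv : (Aadv.card : ℝ) < β * m) :
    multisetQuantile (1/2 - β) Aplus ≤ multisetMedian (Aplus + Aadv) ∧
    multisetMedian (Aplus + Aadv) ≤ multisetQuantile (1/2 + β) Aplus :=
  stmt19_general m β hβ Aplus Aadv hm hplus hadv
end
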